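/- arXiv:2306.00760 — 2 statements merged into one kernel-verified Lean document; each statement's English description precedes it below -/
import Mathlib

section
/- Let N ≥ 2 and d ≥ 1 be integers, let x_1,…,x_N ∈ ℝ^d, μ_1,…,μ_N ∈ ℝ^d and Σ_1,…,Σ_N ∈ ℝ^{d×d}, let h_X > 0 and h_Y > 0 be bandwidths, and let δ be a real number with 0 < δ < √(N−1). Define the Gram matrix K ∈ ℝ^{N×N} by K_{ij} = exp(−‖x_i−x_j‖₂²/(2 h_X²)) · exp(−(‖μ_i−μ_j‖₂² + ‖Σ_i−Σ_j‖_F²)/(2 h_Y²)), and set D_X = (∑_{i>j} ‖x_i−x_j‖₂²)/C(N,2) and D_Y = (∑_{i>j} (‖μ_i−μ_j‖₂² + ‖Σ_i−Σ_j‖_F²))/C(N,2), where C(N,2) = N(N−1)/2. If D_X/h_X² + D_Y/h_Y² ≤ ln((N−1)/δ²), then ‖K − I_N‖_F ≥ δ · ‖I_N‖_F = δ√N. -/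
open Finset

/-- Frobenius norm of a real matrix: the square root of the sum of squares of its entries. -/
noncomputable def frobNorm {m n : Type*} [Fintype m] [Fintype n] (A : Matrix m n ℝ) : ℝ :=
  Real.sqrt (∑ i, ∑ j, (A i j) ^ 2)

theorem bandwidth_condition_implies_gram_far_from_identity
    (N d : ℕ) (hN : 2 ≤ N) (hd : 1 ≤ d)
    (x μ : Fin N → EuclideanSpace ℝ (Fin d))
    (S : Fin N → Matrix (Fin d) (Fin d) ℝ)
    (hX hY δ : ℝ) (hhX : 0 < hX) (hhY : 0 < hY)
    (hδ0 : 0 < δ) (hδ : δ < Real.sqrt ((N : ℝ) - 1))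
    (K : Matrix (Fin N) (Fin N) ℝ)
    (hK : ∀ i j, K i j =
      Real.exp (-‖x i - x j‖ ^ 2 / (2 * hX ^ 2)) *
      Real.exp (-(‖μ i - μ j‖ ^ 2 + (frobNorm (S i - S j)) ^ 2) / (2 * hY ^ 2)))
    (DX DY : ℝ)
    (hDX : DX = (∑ i : Fin N, ∑ j ∈ Finset.univ.filter (· < i), ‖x i - x j‖ ^ 2)
      / ((N : ℝ) * ((N : ℝ) - 1) / 2))
    (hDY : DY = (∑ i : Fin N, ∑ j ∈ Finset.univ.filter (· < i),
        (‖μ i - μ j‖ ^ 2 + (frobNorm (S i - S j)) ^ 2)) / ((N : ℝ) * ((N : ℝ) - 1) / 2))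
    (hcond : DX / hX ^ 2 + DY / hY ^ 2 ≤ Real.log (((N : ℝ) - 1) / δ ^ 2)) :
    frobNorm (K - 1) ≥ δ * Real.sqrt N := by
  have hNR : (2 : ℝ) ≤ (N : ℝ) := by exact_mod_cast hN
  set c : ℝ := (N : ℝ) * ((N : ℝ) - 1) / 2 with hc_def
  have hc : 0 < c := by
    have : (0:ℝ) < (N : ℝ) := by linarith
    have : (0:ℝ) < (N : ℝ) - 1 := by linarith
    positivity
  -- the pairs finset
  set s : Finset ((_ : Fin N) × Fin N) :=
    (univ : Finset (Fin N)).sigma (fun i => univ.filter (· < i)) with hs_def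
  have hcard : (s.card : ℝ) = c := by
    have h1 : s.card = ∑ i : Fin N, (univ.filter (· < i)).card := Finset.card_sigma _ _
    have h2 : ∀ i : Fin N, (univ.filter (· < i)).card = (i : ℕ) := by
      intro i
      rw [show univ.filter (· < i) = Finset.Iio i by ext j; simp]
      exact Fin.card_Iio i
    have h3 : s.card = ∑ j ∈ Finset.range N, j := by
      rw [h1]
      simp only [h2]
      exact Fin.sum_univ_eq_sum_range (fun j => j) N
    have h4 : s.card * 2 = N * (N - 1) := by
      rw [h3]; exact Finset.sum_range_id_mul_two N
    have h5 : ((s.card : ℝ)) * 2 = (N : ℝ) * ((N : ℝ) - 1) := by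
      have := congrArg (fun t : ℕ => (t : ℝ)) h4
      push_cast [Nat.cast_sub (by omega : 1 ≤ N)] at this
      linarith [this]
    rw [hc_def]; linarith
  -- exponent function
  set g : ((_ : Fin N) × Fin N) → ℝ := fun p =>
    (-(hX ^ 2)⁻¹) * ‖x p.1 - x p.2‖ ^ 2
      + (-(hY ^ 2)⁻¹) * (‖μ p.1 - μ p.2‖ ^ 2 + (frobNorm (S p.1 - S p.2)) ^ 2) with hg_def
  have hK2 : ∀ i j, (K i j) ^ 2 = Real.exp (g ⟨i, j⟩) := by
    intro i j
    rw [hK i j, ← Real.exp_add, sq, ← Real.exp_add]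
    congr 1
    simp only [hg_def]
    field_simp
    ring
  -- sum of g over s
  have hA : (∑ i : Fin N, ∑ j ∈ Finset.univ.filter (· < i), ‖x i - x j‖ ^ 2) = DX * c := by
    rw [hDX]; field_simp
  have hB : (∑ i : Fin N, ∑ j ∈ Finset.univ.filter (· < i),
      (‖μ i - μ j‖ ^ 2 + (frobNorm (S i - S j)) ^ 2)) = DY * c := by
    rw [hDY]; field_simp
  have hsumg : ∑ p ∈ s, g p = (-(hX ^ 2)⁻¹) * (DX * c) + (-(hY ^ 2)⁻¹) * (DY * c) := by
    rw [hs_def, Finset.sum_sigma]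
    simp only [hg_def]
    rw [← hA, ← hB]
    simp only [Finset.sum_add_distrib, ← Finset.mul_sum]
  -- Jensen
  have hw : ∑ _p ∈ s, c⁻¹ = 1 := by
    rw [Finset.sum_const, nsmul_eq_mul, hcard]
    field_simp
  have hJ := convexOn_exp.map_sum_le (t := s) (w := fun _ => c⁻¹) (p := g)
    (fun _ _ => by positivity) hw (fun _ _ => Set.mem_univ _)
  simp only [smul_eq_mul, ← Finset.mul_sum] at hJ
  have hT : ∑ p ∈ s, Real.exp (g p) ≥ c * Real.exp (c⁻¹ * ∑ p ∈ s, g p) := by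
    rw [ge_iff_le, ← le_div_iff₀' hc, div_eq_inv_mul]
    exact hJ
  have hexp_arg : c⁻¹ * ∑ p ∈ s, g p = -(DX / hX ^ 2 + DY / hY ^ 2) := by
    rw [hsumg]
    field_simp
    ring
  have hN1 : (0:ℝ) < (N : ℝ) - 1 := by linarith
  have hr : (0:ℝ) < ((N : ℝ) - 1) / δ ^ 2 := by positivity
  have hlow : Real.exp (c⁻¹ * ∑ p ∈ s, g p) ≥ δ ^ 2 / ((N : ℝ) - 1) := by
    rw [hexp_arg]
    have : Real.exp (-Real.log (((N : ℝ) - 1) / δ ^ 2)) ≤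
        Real.exp (-(DX / hX ^ 2 + DY / hY ^ 2)) :=
      Real.exp_le_exp.2 (by linarith)
    rw [Real.exp_neg, Real.exp_log hr] at this
    calc δ ^ 2 / ((N : ℝ) - 1) = (((N : ℝ) - 1) / δ ^ 2)⁻¹ := by
          rw [inv_div]
      _ ≤ Real.exp (-(DX / hX ^ 2 + DY / hY ^ 2)) := this
  have hT2 : ∑ p ∈ s, Real.exp (g p) ≥ (N : ℝ) * δ ^ 2 / 2 := by
    have h1 : c * (δ ^ 2 / ((N : ℝ) - 1)) = (N : ℝ) * δ ^ 2 / 2 := by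
      rw [hc_def]; field_simp
    calc ∑ p ∈ s, Real.exp (g p) ≥ c * Real.exp (c⁻¹ * ∑ p ∈ s, g p) := hT
      _ ≥ c * (δ ^ 2 / ((N : ℝ) - 1)) := by
          apply mul_le_mul_of_nonneg_left hlow hc.le
      _ = (N : ℝ) * δ ^ 2 / 2 := h1
  -- symmetry of g
  have hfrob : ∀ i j, frobNorm (S i - S j) = frobNorm (S j - S i) := by
    intro i j
    unfold frobNorm
    congr 1
    apply Finset.sum_congr rfl; intro a _
    apply Finset.sum_congr rfl; intro b _
    simp only [Matrix.sub_apply]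
    ring
  have hgsym : ∀ i j : Fin N, g ⟨i, j⟩ = g ⟨j, i⟩ := by
    intro i j
    simp only [hg_def]
    rw [norm_sub_rev (x i), norm_sub_rev (μ i), hfrob]
  -- Frobenius norm squared bound
  have hTsig : ∑ p ∈ s, Real.exp (g p)
      = ∑ i : Fin N, ∑ j : Fin N, if j < i then Real.exp (g ⟨i, j⟩) else 0 := by
    rw [hs_def, Finset.sum_sigma]
    exact Finset.sum_congr rfl fun i _ => Finset.sum_filter _ _
  have hswap : (∑ i : Fin N, ∑ j : Fin N, if i < j then Real.exp (g ⟨i, j⟩) else 0)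
      = ∑ p ∈ s, Real.exp (g p) := by
    rw [hTsig, Finset.sum_comm]
    apply Finset.sum_congr rfl; intro i _
    apply Finset.sum_congr rfl; intro j _
    rw [hgsym]
  have hF2 : ∑ i : Fin N, ∑ j : Fin N, ((K - 1) i j) ^ 2 ≥ 2 * ∑ p ∈ s, Real.exp (g p) := by
    have key : ∀ i j : Fin N, ((K - 1) i j) ^ 2 ≥
        (if j < i then Real.exp (g ⟨i, j⟩) else 0)
          + (if i < j then Real.exp (g ⟨i, j⟩) else 0) := by
      intro i j
      rcases lt_trichotomy i j with h | h | h
      · have h' : ¬ j < i := asymm h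
        have hne : i ≠ j := ne_of_lt h
        simp only [if_pos h, if_neg h', zero_add]
        have : (K - 1) i j = K i j := by
          simp [Matrix.sub_apply, Matrix.one_apply_ne hne]
        rw [this, hK2]
      · subst h
        have h0 : (if i < i then Real.exp (g ⟨i, i⟩) else 0) = 0 := if_neg (lt_irrefl i)
        rw [h0, add_zero]
        positivity
      · have h' : ¬ i < j := asymm h
        have hne : i ≠ j := (ne_of_lt h).symm
        simp only [if_pos h, if_neg h', add_zero]
        have : (K - 1) i j = K i j := by
          simp [Matrix.sub_apply, Matrix.one_apply_ne hne]
        rw [this, hK2]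
    calc ∑ i : Fin N, ∑ j : Fin N, ((K - 1) i j) ^ 2
        ≥ ∑ i : Fin N, ∑ j : Fin N,
            ((if j < i then Real.exp (g ⟨i, j⟩) else 0)
              + (if i < j then Real.exp (g ⟨i, j⟩) else 0)) := by
          apply Finset.sum_le_sum; intro i _
          apply Finset.sum_le_sum; intro j _
          exact key i j
      _ = (∑ i : Fin N, ∑ j : Fin N, if j < i then Real.exp (g ⟨i, j⟩) else 0)
            + ∑ i : Fin N, ∑ j : Fin N, if i < j then Real.exp (g ⟨i, j⟩) else 0 := by
          simp [Finset.sum_add_distrib]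
      _ = 2 * ∑ p ∈ s, Real.exp (g p) := by
          rw [hswap, ← hTsig]; ring
  have hF2' : ∑ i : Fin N, ∑ j : Fin N, ((K - 1) i j) ^ 2 ≥ δ ^ 2 * (N : ℝ) := by
    calc ∑ i : Fin N, ∑ j : Fin N, ((K - 1) i j) ^ 2
        ≥ 2 * ∑ p ∈ s, Real.exp (g p) := hF2
      _ ≥ 2 * ((N : ℝ) * δ ^ 2 / 2) := by linarith [hT2]
      _ = δ ^ 2 * (N : ℝ) := by ring
  have : frobNorm (K - 1) ≥ Real.sqrt (δ ^ 2 * (N : ℝ)) := by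
    unfold frobNorm
    exact Real.sqrt_le_sqrt hF2'
  calc frobNorm (K - 1) ≥ Real.sqrt (δ ^ 2 * (N : ℝ)) := this
    _ = δ * Real.sqrt N := by
        rw [Real.sqrt_mul (sq_nonneg δ), Real.sqrt_sq hδ0.le]
end

section
/- Let N ≥ 2 and d ≥ 1 be integers, let x_1,…,x_N ∈ ℝ^d, μ_1,…,μ_N ∈ ℝ^d, Σ_1,…,Σ_N ∈ ℝ^{d×d}, and let δ be a real number with 0 < δ < √(N−1), so that ln((N−1)/δ²) > 0. Set D_X = (∑_{i>j} ‖x_i−x_j‖₂²)/C(N,2) and D_Y = (∑_{i>j} (‖μ_i−μ_j‖₂² + ‖Σ_i−Σ_j‖_F²))/C(N,2), and assume D_X > 0 and D_Y > 0. Choose the bandwidths h_X, h_Y > 0 by h_X² = 2D_X/ln((N−1)/δ²) and h_Y² = 2D_Y/ln((N−1)/δ²). Then D_X/h_X² = D_Y/h_Y² = (1/2)ln((N−1)/δ²), and the Gram matrix K defined by K_{ij} = exp(−‖x_i−x_j‖₂²/(2 h_X²)) · exp(−(‖μ_i−μ_j‖₂² + ‖Σ_i−Σ_j‖_F²)/(2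 h_Y²)) satisfies ‖K − I_N‖_F ≥ δ√N. -/
open Finset

lemma jensen_exp' {α : Type*} (s : Finset α) (f : α → ℝ) :
    (s.card : ℝ) * Real.exp ((∑ a ∈ s, f a) / s.card) ≤ ∑ a ∈ s, Real.exp (f a) := by
  rcases s.eq_empty_or_nonempty with h | h
  · simp [h]
  have hc : (0:ℝ) < s.card := by exact_mod_cast Finset.card_pos.mpr h
  have hmap := convexOn_exp.map_sum_le (t := s) (w := fun _ => ((s.card : ℝ))⁻¹) (p := f)
    (fun i _ => by positivity) (by simp [Finset.sum_const]; field_simp)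
    (fun i _ => Set.mem_univ _)
  simp only [smul_eq_mul, ← Finset.mul_sum] at hmap
  rw [div_eq_inv_mul]
  calc (s.card : ℝ) * Real.exp ((s.card : ℝ)⁻¹ * ∑ a ∈ s, f a)
      ≤ (s.card : ℝ) * ((s.card : ℝ)⁻¹ * ∑ a ∈ s, Real.exp (f a)) := by
        exact mul_le_mul_of_nonneg_left hmap hc.le
    _ = ∑ a ∈ s, Real.exp (f a) := by field_simp

lemma frobNorm_sub_comm {m n : Type*} [Fintype m] [Fintype n] (A B : Matrix m n ℝ) :
    frobNorm (A - B) = frobNorm (B - A) := by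
  unfold frobNorm
  congr 1
  refine Finset.sum_congr rfl fun i _ => Finset.sum_congr rfl fun j _ => ?_
  simp [Matrix.sub_apply]
  ring

theorem equalized_bandwidth_choice_satisfies_gram_condition
    (N d : ℕ) (hN : 2 ≤ N) (hd : 1 ≤ d)
    (x μ : Fin N → EuclideanSpace ℝ (Fin d))
    (S : Fin N → Matrix (Fin d) (Fin d) ℝ)
    (δ : ℝ) (hδ0 : 0 < δ) (hδ : δ < Real.sqrt ((N : ℝ) - 1))
    (DX DY : ℝ)
    (hDX : DX = (∑ i : Fin N, ∑ j ∈ Finset.univ.filter (· < i), ‖x i - x j‖ ^ 2)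
      / ((N : ℝ) * ((N : ℝ) - 1) / 2))
    (hDY : DY = (∑ i : Fin N, ∑ j ∈ Finset.univ.filter (· < i),
        (‖μ i - μ j‖ ^ 2 + (frobNorm (S i - S j)) ^ 2)) / ((N : ℝ) * ((N : ℝ) - 1) / 2))
    (hDXpos : 0 < DX) (hDYpos : 0 < DY)
    (hX hY : ℝ) (hhX : 0 < hX) (hhY : 0 < hY)
    (hhX2 : hX ^ 2 = 2 * DX / Real.log (((N : ℝ) - 1) / δ ^ 2))
    (hhY2 : hY ^ 2 = 2 * DY / Real.log (((N : ℝ) - 1) / δ ^ 2))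
    (K : Matrix (Fin N) (Fin N) ℝ)
    (hK : ∀ i j, K i j =
      Real.exp (-‖x i - x j‖ ^ 2 / (2 * hX ^ 2)) *
      Real.exp (-(‖μ i - μ j‖ ^ 2 + (frobNorm (S i - S j)) ^ 2) / (2 * hY ^ 2))) :
    (DX / hX ^ 2 = (1 / 2) * Real.log (((N : ℝ) - 1) / δ ^ 2) ∧
     DY / hY ^ 2 = (1 / 2) * Real.log (((N : ℝ) - 1) / δ ^ 2)) ∧
    frobNorm (K - 1) ≥ δ * Real.sqrt N := by
  set L : ℝ := Real.log (((N : ℝ) - 1) / δ ^ 2) with hL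
  have hN1 : (2:ℝ) ≤ (N:ℝ) := by exact_mod_cast hN
  have hNm1 : (1:ℝ) ≤ (N:ℝ) - 1 := by linarith
  have hδ2 : δ ^ 2 < (N:ℝ) - 1 := by
    have hs := Real.sq_sqrt (show (0:ℝ) ≤ (N:ℝ) - 1 by linarith)
    nlinarith [Real.sqrt_nonneg ((N:ℝ) - 1)]
  have hLpos : 0 < L := Real.log_pos (by rw [lt_div_iff₀ (pow_pos hδ0 2)]; linarith)
  have hXne : hX ^ 2 ≠ 0 := by positivity
  have hYne : hY ^ 2 ≠ 0 := by positivity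
  have h1 : DX / hX ^ 2 = (1 / 2) * L := by
    rw [hhX2]; field_simp
  have h2 : DY / hY ^ 2 = (1 / 2) * L := by
    rw [hhY2]; field_simp
  refine ⟨⟨h1, h2⟩, ?_⟩
  -- notation
  set C : ℝ := (N : ℝ) * ((N : ℝ) - 1) / 2 with hCdef
  have hCpos : 0 < C := by
    have : (0:ℝ) < (N:ℝ) := by linarith
    have : (0:ℝ) < (N:ℝ) - 1 := by linarith
    positivity
  have hsum_a : ∑ i : Fin N, ∑ j ∈ Finset.univ.filter (· < i), ‖x i - x j‖ ^ 2 = DX * C := by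
    rw [hDX]; field_simp
  have hsum_b : ∑ i : Fin N, ∑ j ∈ Finset.univ.filter (· < i),
      (‖μ i - μ j‖ ^ 2 + (frobNorm (S i - S j)) ^ 2) = DY * C := by
    rw [hDY]; field_simp
  -- squared entries
  have key : ∀ i j, (K i j) ^ 2 =
      Real.exp (-(‖x i - x j‖ ^ 2 / hX ^ 2
        + (‖μ i - μ j‖ ^ 2 + (frobNorm (S i - S j)) ^ 2) / hY ^ 2)) := by
    intro i j
    rw [hK, ← Real.exp_add, sq, ← Real.exp_add]
    congr 1
    field_simp
    ring
  -- the sigma set of pairs j < i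
  set s₀ : Finset ((_ : Fin N) × Fin N) :=
    Finset.univ.sigma (fun i => Finset.univ.filter (· < i)) with hs₀
  have hcard : (s₀.card : ℝ) = C := by
    rw [hs₀, Finset.card_sigma]
    have hfc : ∀ i : Fin N, (Finset.univ.filter (· < i)).card = (i : ℕ) := by
      intro i
      rw [show (Finset.univ.filter (· < i)) = Finset.Iio i by ext j; simp, Fin.card_Iio]
    simp only [hfc]
    have hg := Finset.sum_range_id_mul_two N
    have hr : ∑ i : Fin N, ((i : ℕ)) = ∑ i ∈ Finset.range N, i :=
      Fin.sum_univ_eq_sum_range (fun i => i) N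
    rw [hr]
    have h1N : (1:ℕ) ≤ N := by omega
    have hcast := congrArg (Nat.cast : ℕ → ℝ) hg
    push_cast [Nat.cast_sub h1N] at hcast
    rw [hCdef]
    push_cast
    linarith
  -- sum of exponents over pairs
  have hgsum : ∑ p ∈ s₀, (‖x p.1 - x p.2‖ ^ 2 / hX ^ 2
      + (‖μ p.1 - μ p.2‖ ^ 2 + (frobNorm (S p.1 - S p.2)) ^ 2) / hY ^ 2) = C * L := by
    rw [hs₀, Finset.sum_sigma]
    have : ∀ i : Fin N, ∑ j ∈ Finset.univ.filter (· < i),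
        (‖x i - x j‖ ^ 2 / hX ^ 2
          + (‖μ i - μ j‖ ^ 2 + (frobNorm (S i - S j)) ^ 2) / hY ^ 2)
      = (∑ j ∈ Finset.univ.filter (· < i), ‖x i - x j‖ ^ 2) / hX ^ 2
        + (∑ j ∈ Finset.univ.filter (· < i),
            (‖μ i - μ j‖ ^ 2 + (frobNorm (S i - S j)) ^ 2)) / hY ^ 2 := by
      intro i
      rw [Finset.sum_add_distrib, Finset.sum_div, Finset.sum_div]
    simp only [this]
    rw [Finset.sum_add_distrib, ← Finset.sum_div, ← Finset.sum_div, hsum_a, hsum_b]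
    have e1 : DX * C / hX ^ 2 = C * ((1/2) * L) := by
      rw [mul_comm DX C, mul_div_assoc, h1]
    have e2 : DY * C / hY ^ 2 = C * ((1/2) * L) := by
      rw [mul_comm DY C, mul_div_assoc, h2]
    rw [e1, e2]; ring
  -- Jensen
  have hS : C * (δ ^ 2 / ((N:ℝ) - 1)) ≤ ∑ p ∈ s₀, (K p.1 p.2) ^ 2 := by
    have hJ := jensen_exp' s₀ (fun p => -(‖x p.1 - x p.2‖ ^ 2 / hX ^ 2
      + (‖μ p.1 - μ p.2‖ ^ 2 + (frobNorm (S p.1 - S p.2)) ^ 2) / hY ^ 2))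
    have hexp : (∑ p ∈ s₀, -(‖x p.1 - x p.2‖ ^ 2 / hX ^ 2
        + (‖μ p.1 - μ p.2‖ ^ 2 + (frobNorm (S p.1 - S p.2)) ^ 2) / hY ^ 2)) / (s₀.card : ℝ)
        = -L := by
      rw [Finset.sum_neg_distrib, hgsum, hcard]
      field_simp
    rw [hexp, hcard] at hJ
    have hexpL : Real.exp (-L) = δ ^ 2 / ((N:ℝ) - 1) := by
      rw [hL, Real.exp_neg, Real.exp_log (by positivity), inv_div]
    rw [hexpL] at hJ
    calc C * (δ ^ 2 / ((N:ℝ) - 1)) ≤ ∑ p ∈ s₀, Real.exp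
          (-(‖x p.1 - x p.2‖ ^ 2 / hX ^ 2
            + (‖μ p.1 - μ p.2‖ ^ 2 + (frobNorm (S p.1 - S p.2)) ^ 2) / hY ^ 2)) := hJ
      _ = ∑ p ∈ s₀, (K p.1 p.2) ^ 2 := by
          refine Finset.sum_congr rfl fun p _ => ?_
          rw [key]
  -- entries of K - 1
  have hKsymm : ∀ i j, K i j = K j i := by
    intro i j
    rw [hK, hK, norm_sub_rev (x i), norm_sub_rev (μ i), frobNorm_sub_comm]
  have hoffdiag : ∀ i j : Fin N, i ≠ j → (K - 1) i j = K i j := by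
    intro i j hij
    simp [Matrix.sub_apply, Matrix.one_apply_ne hij]
  have hTlow : δ ^ 2 * (N:ℝ) ≤ ∑ i : Fin N, ∑ j : Fin N, ((K - 1) i j) ^ 2 := by
    have hsplit : ∀ i : Fin N,
        (∑ j ∈ Finset.univ.filter (· < i), ((K - 1) i j) ^ 2)
        + (∑ j ∈ Finset.univ.filter (i < ·), ((K - 1) i j) ^ 2)
        ≤ ∑ j : Fin N, ((K - 1) i j) ^ 2 := by
      intro i
      rw [← Finset.sum_union (by
        rw [Finset.disjoint_filter]
        intro j _ h1 h2
        exact absurd h2 (not_lt_of_gt h1))]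
      exact Finset.sum_le_sum_of_subset_of_nonneg (Finset.subset_univ _)
        (fun j _ _ => sq_nonneg _)
    have hswap : ∑ i : Fin N, ∑ j ∈ Finset.univ.filter (i < ·), ((K - 1) i j) ^ 2
        = ∑ i : Fin N, ∑ j ∈ Finset.univ.filter (· < i), ((K - 1) i j) ^ 2 := by
      rw [← Finset.sum_sigma (Finset.univ) (fun i => Finset.univ.filter (i < ·))
        (fun p => ((K - 1) p.1 p.2) ^ 2),
        ← Finset.sum_sigma (Finset.univ) (fun i => Finset.univ.filter (· < i))
        (fun p => ((K - 1) p.1 p.2) ^ 2)]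
      refine Finset.sum_nbij' (fun p => ⟨p.2, p.1⟩) (fun p => ⟨p.2, p.1⟩) ?_ ?_ ?_ ?_ ?_
      · intro p hp
        simp only [Finset.mem_sigma, Finset.mem_filter, Finset.mem_univ, true_and] at hp ⊢
        exact hp
      · intro p hp
        simp only [Finset.mem_sigma, Finset.mem_filter, Finset.mem_univ, true_and] at hp ⊢
        exact hp
      · intro p _; rfl
      · intro p _; rfl
      · intro p hp
        simp only [Finset.mem_sigma, Finset.mem_filter, Finset.mem_univ, true_and] at hp
        have hne : p.1 ≠ p.2 := ne_of_lt hp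
        rw [hoffdiag _ _ hne, hoffdiag _ _ (Ne.symm hne), hKsymm]
    have hlt : ∀ i : Fin N, ∑ j ∈ Finset.univ.filter (· < i), ((K - 1) i j) ^ 2
        = ∑ j ∈ Finset.univ.filter (· < i), (K i j) ^ 2 := by
      intro i
      refine Finset.sum_congr rfl fun j hj => ?_
      rw [Finset.mem_filter] at hj
      rw [hoffdiag _ _ (ne_of_gt hj.2)]
    have hSs : ∑ p ∈ s₀, (K p.1 p.2) ^ 2
        = ∑ i : Fin N, ∑ j ∈ Finset.univ.filter (· < i), (K i j) ^ 2 := by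
      rw [hs₀, Finset.sum_sigma]
    calc δ ^ 2 * (N:ℝ) = 2 * (C * (δ ^ 2 / ((N:ℝ) - 1))) := by
          rw [hCdef]; field_simp
      _ ≤ 2 * ∑ p ∈ s₀, (K p.1 p.2) ^ 2 := by linarith
      _ = (∑ i : Fin N, ∑ j ∈ Finset.univ.filter (· < i), ((K - 1) i j) ^ 2)
          + (∑ i : Fin N, ∑ j ∈ Finset.univ.filter (i < ·), ((K - 1) i j) ^ 2) := by
          rw [hswap, hSs]
          simp only [hlt]
          ring
      _ = ∑ i : Fin N, ((∑ j ∈ Finset.univ.filter (· < i), ((K - 1) i j) ^ 2)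
          + (∑ j ∈ Finset.univ.filter (i < ·), ((K - 1) i j) ^ 2)) := by
          rw [Finset.sum_add_distrib]
      _ ≤ ∑ i : Fin N, ∑ j : Fin N, ((K - 1) i j) ^ 2 :=
          Finset.sum_le_sum fun i _ => hsplit i
  -- finish
  unfold frobNorm
  rw [ge_iff_le, show δ * Real.sqrt N = Real.sqrt (δ ^ 2 * N) by
    rw [Real.sqrt_mul (sq_nonneg δ), Real.sqrt_sq hδ0.le]]
  exact Real.sqrt_le_sqrt hTlow
end
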